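/- arXiv:2205.11461 — 5 statements merged into one kernel-verified Lean document; each statement's English description precedes it below -/
import Mathlib

section
/- The Fano-non-Fano condition on {A_i}_{i∈E} holds if and only if tri(A_i, A_j, A_k) holds for every {i,j,k} ∈ D_N and A_1, A_2, A_3 are mutually independent. -/
open scoped Classical

noncomputable section

/-- The probability of the event `S` under the probability mass function `p`. -/
def Pr {Ω : Type} (p : Ω → ℝ) (S : Set Ω) : ℝ := ∑' ω : S, p ω

/-- `p` is a probability mass function on the sample space `Ω`. -/
def IsProb {Ω : Type} (p : Ω → ℝ) : Prop := (∀ ω, 0 ≤ p ω) ∧ Pr p Set.univ = 1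

/-- The support of a random variable `X`: the set of values attained with positive
probability. -/
def supp {Ω α : Type} (p : Ω → ℝ) (X : Ω → α) : Set α := {a | 0 < Pr p {ω | X ω = a}}

/-- `X` is almost surely a function of `Y` (written `X ≤ι Y` in the paper). -/
def FuncOf {Ω α β : Type} (p : Ω → ℝ) (X : Ω → α) (Y : Ω → β) : Prop :=
  ∃ f : β → α, Pr p {ω | X ω = f (Y ω)} = 1

/-- The random variables `X` and `Y` are independent. -/
def IndepRV {Ω α β : Type} (p : Ω → ℝ) (X : Ω → α) (Y : Ω → β) : Prop :=
  ∀ (a : α) (b : β), Pr p {ω | X ω = a ∧ Y ω = b} = Pr p {ω | X ω = a} * Pr p {ω | Y ω = b}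

/-- The random variables `X`, `Y`, `Z` are mutually independent:
`X ⟂ Y` and `(X, Y) ⟂ Z`. -/
def Indep3 {Ω α β γ : Type} (p : Ω → ℝ) (X : Ω → α) (Y : Ω → β) (Z : Ω → γ) : Prop :=
  IndepRV p X Y ∧ IndepRV p (fun ω => (X ω, Y ω)) Z

/-- The predicate `tri(X, Y, Z)`: each variable is a.s. a function of the other two, and the
three variables are pairwise independent. -/
def tri {Ω α β γ : Type} (p : Ω → ℝ) (X : Ω → α) (Y : Ω → β) (Z : Ω → γ) : Prop :=
  FuncOf p X (fun ω => (Y ω, Z ω)) ∧ FuncOf p Y (fun ω => (X ω, Z ω)) ∧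
    FuncOf p Z (fun ω => (X ω, Y ω)) ∧
    IndepRV p X Y ∧ IndepRV p X Z ∧ IndepRV p Y Z

/- The ground set `E = {1,2,3,12,13,23,123}` is represented by `Fin 7`, where
`0 ↦ 1`, `1 ↦ 2`, `2 ↦ 3`, `3 ↦ 12`, `4 ↦ 13`, `5 ↦ 23`, `6 ↦ 123`. -/

/-- `{i,j,k}` is one of the dependent 3-sets of the non-Fano matroid, i.e. one of
`{1,2,12}, {1,3,13}, {2,3,23}, {1,23,123}, {2,13,123}, {3,12,123}`. -/
def inDN (i j k : Fin 7) : Prop :=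
  ({i, j, k} : Finset (Fin 7)) ∈
    ({{0, 1, 3}, {0, 2, 4}, {1, 2, 5}, {0, 5, 6}, {1, 4, 6}, {2, 3, 6}} :
      Finset (Finset (Fin 7)))

/-- `{i,j,k}` is a dependent 3-set of the Fano matroid (`D_F = D_N ∪ {{12,13,23}}`). -/
def inDF (i j k : Fin 7) : Prop :=
  inDN i j k ∨ ({i, j, k} : Finset (Fin 7)) = {3, 4, 5}

/-- `{i,j,k}` is an independent 3-set of the Fano matroid: a 3-element subset of `E`
not in `D_F`. -/
def inIF (i j k : Fin 7) : Prop :=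
  ({i, j, k} : Finset (Fin 7)).card = 3 ∧ ¬ inDF i j k

/-- The Fano-non-Fano condition on the seven random variables `A 0, …, A 6`
(representing `A_1, A_2, A_3, A_12, A_13, A_23, A_123`): `tri` holds for every triple in
`D_N`, and mutual independence holds for every triple in `I_F`. -/
def fnf {Ω : Type} (p : Ω → ℝ) {α : Fin 7 → Type} (A : ∀ i, Ω → α i) : Prop :=
  (∀ i j k, inDN i j k → tri p (A i) (A j) (A k)) ∧
  (∀ i j k, inIF i j k → Indep3 p (A i) (A j) (A k))

section PrLemmas
variable {Ω : Type} {p : Ω → ℝ}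

lemma Pr_indicator (S : Set Ω) : Pr p S = ∑' ω, S.indicator p ω := tsum_subtype S p

lemma isProb_summable (hp : IsProb p) : Summable p := by
  by_contra h
  have h1 := hp.2
  rw [Pr_indicator, Set.indicator_univ, tsum_eq_zero_of_not_summable h] at h1
  exact zero_ne_one h1

lemma indicator_summable (hp : IsProb p) (S : Set Ω) : Summable (S.indicator p) :=
  (isProb_summable hp).indicator S

lemma indicator_nonneg' (hp : IsProb p) (S : Set Ω) (ω : Ω) : 0 ≤ S.indicator p ω :=
  Set.indicator_nonneg (fun a _ => hp.1 a) ω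

lemma Pr_nonneg (hp : IsProb p) (S : Set Ω) : 0 ≤ Pr p S := by
  rw [Pr_indicator]; exact tsum_nonneg (indicator_nonneg' hp S)

lemma Pr_mono (hp : IsProb p) {S T : Set Ω} (h : S ⊆ T) : Pr p S ≤ Pr p T := by
  rw [Pr_indicator, Pr_indicator]
  exact Summable.tsum_le_tsum (fun ω => Set.indicator_le_indicator_of_subset h (fun a => hp.1 a) ω)
    (indicator_summable hp S) (indicator_summable hp T)

lemma Pr_union_le (hp : IsProb p) (S T : Set Ω) : Pr p (S ∪ T) ≤ Pr p S + Pr p T := by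
  rw [Pr_indicator, Pr_indicator, Pr_indicator, ← Summable.tsum_add (indicator_summable hp S) (indicator_summable hp T)]
  refine Summable.tsum_le_tsum (fun ω => ?_) (indicator_summable hp _)
    ((indicator_summable hp S).add (indicator_summable hp T))
  by_cases hS : ω ∈ S <;> by_cases hT : ω ∈ T <;>
    simp [Set.indicator_apply, hS, hT, hp.1 ω]

lemma Pr_union_disjoint (hp : IsProb p) {S T : Set Ω} (h : Disjoint S T) :
    Pr p (S ∪ T) = Pr p S + Pr p T := by
  rw [Pr_indicator, Pr_indicator, Pr_indicator,
    ← Summable.tsum_add (indicator_summable hp S) (indicator_summable hp T),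
    Set.indicator_union_of_disjoint h]

lemma Pr_eq_zero_of (h : ∀ ω ∈ S, p ω = 0) : Pr p S = 0 := by
  rw [Pr_indicator]
  have : S.indicator p = fun _ => 0 := by
    funext ω; by_cases hω : ω ∈ S <;> simp [Set.indicator_apply, hω, h ω]
  rw [this, tsum_zero]

lemma Pr_empty : Pr p (∅ : Set Ω) = 0 := Pr_eq_zero_of (fun ω hω => absurd hω (Set.notMem_empty ω))

lemma Pr_compl (hp : IsProb p) (S : Set Ω) : Pr p S + Pr p Sᶜ = 1 := by
  rw [← Pr_union_disjoint hp disjoint_compl_right, Set.union_compl_self]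
  exact hp.2

lemma Pr_eq_zero_of_subset (hp : IsProb p) {S N : Set Ω} (h : S ⊆ N) (hN : Pr p N = 0) :
    Pr p S = 0 :=
  le_antisymm (hN ▸ Pr_mono hp h) (Pr_nonneg hp S)

lemma Pr_eq_mod (hp : IsProb p) {S T N : Set Ω} (hN : Pr p N = 0)
    (h1 : S ⊆ T ∪ N) (h2 : T ⊆ S ∪ N) : Pr p S = Pr p T := by
  have a1 : Pr p S ≤ Pr p T + Pr p N := le_trans (Pr_mono hp h1) (Pr_union_le hp T N)
  have a2 : Pr p T ≤ Pr p S + Pr p N := le_trans (Pr_mono hp h2) (Pr_union_le hp S N)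
  rw [hN] at a1 a2; linarith

lemma le_Pr_of_mem (hp : IsProb p) {S : Set Ω} {ω : Ω} (h : ω ∈ S) : p ω ≤ Pr p S := by
  rw [Pr_indicator]
  have := Summable.le_tsum (indicator_summable hp S) ω (fun b _ => indicator_nonneg' hp S b)
  rwa [Set.indicator_of_mem h] at this

lemma p_eq_zero_of_not_supp {γ : Type} (hp : IsProb p) {Z : Ω → γ} {ω : Ω}
    (h : Z ω ∉ supp p Z) : p ω = 0 := by
  by_contra hne
  exact h (lt_of_lt_of_le (lt_of_le_of_ne (hp.1 ω) (Ne.symm hne))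
    (le_Pr_of_mem hp (by simp : ω ∈ {ω' | Z ω' = Z ω})))

lemma Pr_finset_biUnion (hp : IsProb p) {γ : Type} (F : Finset γ) (g : γ → Set Ω)
    (hdis : ∀ c ∈ F, ∀ d ∈ F, c ≠ d → Disjoint (g c) (g d)) :
    Pr p (⋃ c ∈ F, g c) = ∑ c ∈ F, Pr p (g c) := by
  classical
  induction F using Finset.induction with
  | empty => simp [Pr_empty]
  | @insert a F ha ih =>
    rw [Finset.set_biUnion_insert, Finset.sum_insert ha,
      Pr_union_disjoint hp, ih (fun c hc d hd hcd =>
        hdis c (Finset.mem_insert_of_mem hc) d (Finset.mem_insert_of_mem hd) hcd)]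
    refine Set.disjoint_left.2 fun ω hω hω' => ?_
    obtain ⟨c, hc, hmem⟩ := Set.mem_iUnion₂.1 hω'
    exact Set.disjoint_left.1
      (hdis a (Finset.mem_insert_self a F) c (Finset.mem_insert_of_mem hc)
        (fun h => ha (h ▸ hc))) hω hmem

lemma Pr_marg {γ : Type} (hp : IsProb p) {Z : Ω → γ} (hZ : (supp p Z).Finite) (S : Set Ω) :
    Pr p S = ∑ c ∈ hZ.toFinset, Pr p (S ∩ {ω | Z ω = c}) := by
  have hdis : ∀ c ∈ hZ.toFinset, ∀ d ∈ hZ.toFinset, c ≠ d →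
      Disjoint (S ∩ {ω | Z ω = c}) (S ∩ {ω | Z ω = d}) := by
    intro c _ d _ hcd
    refine Set.disjoint_left.2 fun ω hω hω' => hcd ?_
    rw [← hω.2, ← hω'.2]
  rw [← Pr_finset_biUnion hp _ _ hdis]
  have hsplit : S = (⋃ c ∈ hZ.toFinset, S ∩ {ω | Z ω = c}) ∪ (S ∩ {ω | Z ω ∉ supp p Z}) := by
    ext ω
    constructor
    · intro hω
      by_cases hs : Z ω ∈ supp p Z
      · exact Or.inl (Set.mem_iUnion₂.2 ⟨Z ω, hZ.mem_toFinset.2 hs, hω, rfl⟩)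
      · exact Or.inr ⟨hω, hs⟩
    · rintro (hω | hω)
      · obtain ⟨c, _, hmem, _⟩ := Set.mem_iUnion₂.1 hω; exact hmem
      · exact hω.1
  have hdisj2 : Disjoint (⋃ c ∈ hZ.toFinset, S ∩ {ω | Z ω = c}) (S ∩ {ω | Z ω ∉ supp p Z}) := by
    refine Set.disjoint_left.2 fun ω hω hω' => ?_
    obtain ⟨c, hc, _, hzc⟩ := Set.mem_iUnion₂.1 hω
    exact hω'.2 (hzc ▸ hZ.mem_toFinset.1 hc)
  have hU : Pr p S =
      Pr p ((⋃ c ∈ hZ.toFinset, S ∩ {ω | Z ω = c}) ∪ (S ∩ {ω | Z ω ∉ supp p Z})) := by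
    rw [← hsplit]
  have hzero : Pr p (S ∩ {ω | Z ω ∉ supp p Z}) = 0 :=
    Pr_eq_zero_of (fun ω hω => p_eq_zero_of_not_supp hp hω.2)
  rw [hU, Pr_union_disjoint hp hdisj2, hzero, add_zero]

lemma sum_Pr_eq_one {γ : Type} (hp : IsProb p) {Z : Ω → γ} (hZ : (supp p Z).Finite) :
    ∑ c ∈ hZ.toFinset, Pr p {ω | Z ω = c} = 1 := by
  have := Pr_marg hp hZ Set.univ
  rw [hp.2] at this
  simpa [Set.univ_inter] using this.symm

end PrLemmas

section P3section
def P3 {Ω α β γ : Type} (p : Ω → ℝ) (X : Ω → α) (Y : Ω → β) (Z : Ω → γ) : Prop :=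
  ∀ a b c, Pr p {ω | X ω = a ∧ Y ω = b ∧ Z ω = c} =
    Pr p {ω | X ω = a} * Pr p {ω | Y ω = b} * Pr p {ω | Z ω = c}

variable {Ω α β γ δ : Type} {p : Ω → ℝ} {X : Ω → α} {Y : Ω → β} {Z : Ω → γ} {W : Ω → δ}

lemma P3.swapL (h : P3 p X Y Z) : P3 p Y X Z := by
  intro b a c
  have hset : {ω | Y ω = b ∧ X ω = a ∧ Z ω = c} = {ω | X ω = a ∧ Y ω = b ∧ Z ω = c} := by
    ext ω; exact ⟨fun h => ⟨h.2.1, h.1, h.2.2⟩, fun h => ⟨h.2.1, h.1, h.2.2⟩⟩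
  rw [hset, h a b c]; ring

lemma P3.swapR (h : P3 p X Y Z) : P3 p X Z Y := by
  intro a c b
  have hset : {ω | X ω = a ∧ Z ω = c ∧ Y ω = b} = {ω | X ω = a ∧ Y ω = b ∧ Z ω = c} := by
    ext ω; exact ⟨fun h => ⟨h.1, h.2.2, h.2.1⟩, fun h => ⟨h.1, h.2.2, h.2.1⟩⟩
  rw [hset, h a b c]; ring

lemma indepXY_of_P3 (hp : IsProb p) (hZ : (supp p Z).Finite) (h : P3 p X Y Z) :
    IndepRV p X Y := by
  intro a b
  have hm := Pr_marg hp hZ {ω | X ω = a ∧ Y ω = b}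
  have hc : ∀ c ∈ hZ.toFinset, Pr p ({ω | X ω = a ∧ Y ω = b} ∩ {ω | Z ω = c}) =
      Pr p {ω | X ω = a} * Pr p {ω | Y ω = b} * Pr p {ω | Z ω = c} := by
    intro c _
    have hset : ({ω | X ω = a ∧ Y ω = b} ∩ {ω | Z ω = c}) =
        {ω | X ω = a ∧ Y ω = b ∧ Z ω = c} := by
      ext ω; exact ⟨fun h => ⟨h.1.1, h.1.2, h.2⟩, fun h => ⟨⟨h.1, h.2.1⟩, h.2.2⟩⟩
    rw [hset, h a b c]
  rw [hm, Finset.sum_congr rfl hc, ← Finset.mul_sum, sum_Pr_eq_one hp hZ, mul_one]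

lemma P3_of_Indep3 (h : Indep3 p X Y Z) : P3 p X Y Z := by
  intro a b c
  obtain ⟨h1, h2⟩ := h
  have e1 : {ω | X ω = a ∧ Y ω = b ∧ Z ω = c} =
      {ω | (fun ω => (X ω, Y ω)) ω = (a, b) ∧ Z ω = c} := by
    ext ω; simp only [Set.mem_setOf_eq, Prod.mk.injEq]; tauto
  have e2 : {ω | (fun ω => (X ω, Y ω)) ω = (a, b)} = {ω | X ω = a ∧ Y ω = b} := by
    ext ω; simp only [Set.mem_setOf_eq, Prod.mk.injEq]
  rw [e1, h2 (a, b) c, e2, h1 a b]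

lemma Indep3_of_P3 (hp : IsProb p) (hZ : (supp p Z).Finite) (h : P3 p X Y Z) :
    Indep3 p X Y Z := by
  have h1 : IndepRV p X Y := indepXY_of_P3 hp hZ h
  refine ⟨h1, ?_⟩
  rintro ⟨a, b⟩ c
  have e1 : {ω | (fun ω => (X ω, Y ω)) ω = (a, b) ∧ Z ω = c} =
      {ω | X ω = a ∧ Y ω = b ∧ Z ω = c} := by
    ext ω; simp only [Set.mem_setOf_eq, Prod.mk.injEq]; tauto
  have e2 : {ω | (fun ω => (X ω, Y ω)) ω = (a, b)} = {ω | X ω = a ∧ Y ω = b} := by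
    ext ω; simp only [Set.mem_setOf_eq, Prod.mk.injEq]
  rw [e1, e2, h a b c, h1 a b]

lemma P3.exchange (hp : IsProb p) (hY : (supp p Y).Finite) (hZ : (supp p Z).Finite)
    (h3 : P3 p X Y Z) (hXW : IndepRV p X W)
    (hW : FuncOf p W (fun ω => (X ω, Z ω))) : P3 p X Y W := by
  obtain ⟨f, hf⟩ := hW
  set N := {ω | W ω = f (X ω, Z ω)}ᶜ with hNdef
  have hN : Pr p N = 0 := by
    have := Pr_compl hp {ω | W ω = f (X ω, Z ω)}
    rw [hf] at this; linarith
  have hXZ : IndepRV p X Z := indepXY_of_P3 hp hY h3.swapR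
  intro a b c
  have key : ∀ z, Pr p ({ω | X ω = a ∧ Y ω = b ∧ W ω = c} ∩ {ω | Z ω = z}) =
      (if f (a, z) = c then
        Pr p {ω | X ω = a} * Pr p {ω | Y ω = b} * Pr p {ω | Z ω = z} else 0) := by
    intro z
    by_cases hfz : f (a, z) = c
    · rw [if_pos hfz, ← h3 a b z]
      refine Pr_eq_mod hp hN ?_ ?_
      · intro ω hω
        exact Or.inl ⟨hω.1.1, hω.1.2.1, hω.2⟩
      · intro ω hω
        rcases em (ω ∈ N) with hn | hn
        · exact Or.inr hn
        · have hw : W ω = f (X ω, Z ω) := not_not.mp hn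
          refine Or.inl ⟨⟨hω.1, hω.2.1, ?_⟩, hω.2.2⟩
          rw [hw, hω.1, hω.2.2, hfz]
    · rw [if_neg hfz]
      refine Pr_eq_zero_of_subset hp ?_ hN
      intro ω hω
      intro hw
      exact hfz (by rw [← hω.1.1, ← hω.2, ← hw, hω.1.2.2])
  have key2 : ∀ z, Pr p ({ω | X ω = a ∧ W ω = c} ∩ {ω | Z ω = z}) =
      (if f (a, z) = c then Pr p {ω | X ω = a} * Pr p {ω | Z ω = z} else 0) := by
    intro z
    by_cases hfz : f (a, z) = c
    · rw [if_pos hfz, ← hXZ a z]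
      refine Pr_eq_mod hp hN ?_ ?_
      · intro ω hω
        exact Or.inl ⟨hω.1.1, hω.2⟩
      · intro ω hω
        rcases em (ω ∈ N) with hn | hn
        · exact Or.inr hn
        · have hw : W ω = f (X ω, Z ω) := not_not.mp hn
          refine Or.inl ⟨⟨hω.1, ?_⟩, hω.2⟩
          rw [hw, hω.1, hω.2, hfz]
    · rw [if_neg hfz]
      refine Pr_eq_zero_of_subset hp ?_ hN
      intro ω hω
      intro hw
      exact hfz (by rw [← hω.1.1, ← hω.2, ← hw, hω.1.2])
  rw [Pr_marg hp hZ {ω | X ω = a ∧ Y ω = b ∧ W ω = c},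
    Finset.sum_congr rfl (fun z _ => key z)]
  have hmargW := Pr_marg hp hZ {ω | X ω = a ∧ W ω = c}
  rw [Finset.sum_congr rfl (fun z _ => key2 z)] at hmargW
  have hstep : ∑ z ∈ hZ.toFinset,
      (if f (a, z) = c then
        Pr p {ω | X ω = a} * Pr p {ω | Y ω = b} * Pr p {ω | Z ω = z} else 0) =
      Pr p {ω | Y ω = b} * ∑ z ∈ hZ.toFinset,
      (if f (a, z) = c then Pr p {ω | X ω = a} * Pr p {ω | Z ω = z} else 0) := by
    rw [Finset.mul_sum]
    refine Finset.sum_congr rfl fun z _ => ?_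
    by_cases hfz : f (a, z) = c <;> simp [hfz] <;> ring
  rw [hstep, ← hmargW, hXW a c]
  ring
end P3section

instance (i j k : Fin 7) : Decidable (inDN i j k) := by unfold inDN; infer_instance
instance (i j k : Fin 7) : Decidable (inDF i j k) := by unfold inDF; infer_instance
instance (i j k : Fin 7) : Decidable (inIF i j k) := by unfold inIF; infer_instance

/-- Proposition `fnf_equiv`: the Fano-non-Fano condition holds if and only
if `tri(A_i, A_j, A_k)` holds for every `{i,j,k} ∈ D_N` and `A_1, A_2, A_3` are mutually
independent. -/
theorem fnf_iff_tri_and_indep3 {Ω : Type} (p : Ω → ℝ) (hp : IsProb p)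
    {α : Fin 7 → Type} (A : ∀ i, Ω → α i) (hfin : ∀ i, (supp p (A i)).Finite) :
    fnf p A ↔
      ((∀ i j k, inDN i j k → tri p (A i) (A j) (A k)) ∧
        Indep3 p (A 0) (A 1) (A 2)) := by
  constructor
  · intro h
    exact ⟨h.1, h.2 0 1 2 (by decide)⟩
  · rintro ⟨h1, h2⟩
    refine ⟨h1, ?_⟩
    have htri : ∀ i j k : Fin 7, inDN i j k →
        FuncOf p (A k) (fun ω => (A i ω, A j ω)) ∧ IndepRV p (A i) (A k) :=
      fun i j k h => ⟨(h1 i j k h).2.2.1, (h1 i j k h).2.2.2.2.1⟩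
    have h012 : P3 p (A 0) (A 1) (A 2) := P3_of_Indep3 h2
    have h023 : P3 p (A 0) (A 2) (A 3) :=
      P3.exchange hp (hfin 2) (hfin 1) (h012.swapR) (htri 0 1 3 (by decide)).2 (htri 0 1 3 (by decide)).1
    have h014 : P3 p (A 0) (A 1) (A 4) :=
      P3.exchange hp (hfin 1) (hfin 2) (h012) (htri 0 2 4 (by decide)).2 (htri 0 2 4 (by decide)).1
    have h123 : P3 p (A 1) (A 2) (A 3) :=
      P3.exchange hp (hfin 2) (hfin 0) (h012.swapL.swapR) (htri 1 0 3 (by decide)).2 (htri 1 0 3 (by decide)).1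
    have h015 : P3 p (A 0) (A 1) (A 5) :=
      (P3.exchange hp (hfin 0) (hfin 2) (h012.swapL) (htri 1 2 5 (by decide)).2 (htri 1 2 5 (by decide)).1).swapL
    have h124 : P3 p (A 1) (A 2) (A 4) :=
      (P3.exchange hp (hfin 1) (hfin 0) (h012.swapL.swapR.swapL) (htri 2 0 4 (by decide)).2 (htri 2 0 4 (by decide)).1).swapL
    have h025 : P3 p (A 0) (A 2) (A 5) :=
      (P3.exchange hp (hfin 0) (hfin 1) (h012.swapR.swapL) (htri 2 1 5 (by decide)).2 (htri 2 1 5 (by decide)).1).swapL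
    have h034 : P3 p (A 0) (A 3) (A 4) :=
      P3.exchange hp (hfin 3) (hfin 2) (h023.swapR) (htri 0 2 4 (by decide)).2 (htri 0 2 4 (by decide)).1
    have h234 : P3 p (A 2) (A 3) (A 4) :=
      P3.exchange hp (hfin 3) (hfin 0) (h023.swapL.swapR) (htri 2 0 4 (by decide)).2 (htri 2 0 4 (by decide)).1
    have h026 : P3 p (A 0) (A 2) (A 6) :=
      (P3.exchange hp (hfin 0) (hfin 3) (h023.swapL) (htri 2 3 6 (by decide)).2 (htri 2 3 6 (by decide)).1).swapL
    have h036 : P3 p (A 0) (A 3) (A 6) :=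
      (P3.exchange hp (hfin 0) (hfin 2) (h023.swapR.swapL) (htri 3 2 6 (by decide)).2 (htri 3 2 6 (by decide)).1).swapL
    have h134 : P3 p (A 1) (A 3) (A 4) :=
      (P3.exchange hp (hfin 4) (hfin 0) (h014.swapL.swapR) (htri 1 0 3 (by decide)).2 (htri 1 0 3 (by decide)).1).swapR
    have h016 : P3 p (A 0) (A 1) (A 6) :=
      (P3.exchange hp (hfin 0) (hfin 4) (h014.swapL) (htri 1 4 6 (by decide)).2 (htri 1 4 6 (by decide)).1).swapL
    have h046 : P3 p (A 0) (A 4) (A 6) :=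
      (P3.exchange hp (hfin 0) (hfin 1) (h014.swapR.swapL) (htri 4 1 6 (by decide)).2 (htri 4 1 6 (by decide)).1).swapL
    have h135 : P3 p (A 1) (A 3) (A 5) :=
      P3.exchange hp (hfin 3) (hfin 2) (h123.swapR) (htri 1 2 5 (by decide)).2 (htri 1 2 5 (by decide)).1
    have h235 : P3 p (A 2) (A 3) (A 5) :=
      P3.exchange hp (hfin 3) (hfin 1) (h123.swapL.swapR) (htri 2 1 5 (by decide)).2 (htri 2 1 5 (by decide)).1
    have h126 : P3 p (A 1) (A 2) (A 6) :=
      (P3.exchange hp (hfin 1) (hfin 3) (h123.swapL) (htri 2 3 6 (by decide)).2 (htri 2 3 6 (by decide)).1).swapL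
    have h136 : P3 p (A 1) (A 3) (A 6) :=
      (P3.exchange hp (hfin 1) (hfin 2) (h123.swapR.swapL) (htri 3 2 6 (by decide)).2 (htri 3 2 6 (by decide)).1).swapL
    have h035 : P3 p (A 0) (A 3) (A 5) :=
      (P3.exchange hp (hfin 5) (hfin 1) (h015.swapR) (htri 0 1 3 (by decide)).2 (htri 0 1 3 (by decide)).1).swapR
    have h156 : P3 p (A 1) (A 5) (A 6) :=
      (P3.exchange hp (hfin 1) (hfin 0) (h015.swapL.swapR.swapL) (htri 5 0 6 (by decide)).2 (htri 5 0 6 (by decide)).1).swapL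
    have h145 : P3 p (A 1) (A 4) (A 5) :=
      P3.exchange hp (hfin 4) (hfin 2) (h124.swapR) (htri 1 2 5 (by decide)).2 (htri 1 2 5 (by decide)).1
    have h245 : P3 p (A 2) (A 4) (A 5) :=
      P3.exchange hp (hfin 4) (hfin 1) (h124.swapL.swapR) (htri 2 1 5 (by decide)).2 (htri 2 1 5 (by decide)).1
    have h246 : P3 p (A 2) (A 4) (A 6) :=
      (P3.exchange hp (hfin 2) (hfin 1) (h124.swapL.swapR.swapL) (htri 4 1 6 (by decide)).2 (htri 4 1 6 (by decide)).1).swapL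
    have h045 : P3 p (A 0) (A 4) (A 5) :=
      (P3.exchange hp (hfin 5) (hfin 2) (h025.swapR) (htri 0 2 4 (by decide)).2 (htri 0 2 4 (by decide)).1).swapR
    have h256 : P3 p (A 2) (A 5) (A 6) :=
      (P3.exchange hp (hfin 2) (hfin 0) (h025.swapL.swapR.swapL) (htri 5 0 6 (by decide)).2 (htri 5 0 6 (by decide)).1).swapL
    have h346 : P3 p (A 3) (A 4) (A 6) :=
      P3.exchange hp (hfin 4) (hfin 2) (h234.swapL.swapR) (htri 3 2 6 (by decide)).2 (htri 3 2 6 (by decide)).1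
    have h356 : P3 p (A 3) (A 5) (A 6) :=
      (P3.exchange hp (hfin 3) (hfin 0) (h036.swapL.swapR.swapL) (htri 6 0 5 (by decide)).2 (htri 6 0 5 (by decide)).1).swapL.swapR
    have h456 : P3 p (A 4) (A 5) (A 6) :=
      (P3.exchange hp (hfin 4) (hfin 0) (h046.swapL.swapR.swapL) (htri 6 0 5 (by decide)).2 (htri 6 0 5 (by decide)).1).swapL.swapR
    intro i j k hijk
    fin_cases i <;> fin_cases j <;> fin_cases k <;>
      first
        | exact absurd hijk (by decide)
        | skip
    · exact Indep3_of_P3 hp (hfin 2) (h012)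
    · exact Indep3_of_P3 hp (hfin 4) (h014)
    · exact Indep3_of_P3 hp (hfin 5) (h015)
    · exact Indep3_of_P3 hp (hfin 6) (h016)
    · exact Indep3_of_P3 hp (hfin 1) (h012.swapR)
    · exact Indep3_of_P3 hp (hfin 3) (h023)
    · exact Indep3_of_P3 hp (hfin 5) (h025)
    · exact Indep3_of_P3 hp (hfin 6) (h026)
    · exact Indep3_of_P3 hp (hfin 2) (h023.swapR)
    · exact Indep3_of_P3 hp (hfin 4) (h034)
    · exact Indep3_of_P3 hp (hfin 5) (h035)
    · exact Indep3_of_P3 hp (hfin 6) (h036)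
    · exact Indep3_of_P3 hp (hfin 1) (h014.swapR)
    · exact Indep3_of_P3 hp (hfin 3) (h034.swapR)
    · exact Indep3_of_P3 hp (hfin 5) (h045)
    · exact Indep3_of_P3 hp (hfin 6) (h046)
    · exact Indep3_of_P3 hp (hfin 1) (h015.swapR)
    · exact Indep3_of_P3 hp (hfin 2) (h025.swapR)
    · exact Indep3_of_P3 hp (hfin 3) (h035.swapR)
    · exact Indep3_of_P3 hp (hfin 4) (h045.swapR)
    · exact Indep3_of_P3 hp (hfin 1) (h016.swapR)
    · exact Indep3_of_P3 hp (hfin 2) (h026.swapR)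
    · exact Indep3_of_P3 hp (hfin 3) (h036.swapR)
    · exact Indep3_of_P3 hp (hfin 4) (h046.swapR)
    · exact Indep3_of_P3 hp (hfin 2) (h012.swapL)
    · exact Indep3_of_P3 hp (hfin 4) (h014.swapL)
    · exact Indep3_of_P3 hp (hfin 5) (h015.swapL)
    · exact Indep3_of_P3 hp (hfin 6) (h016.swapL)
    · exact Indep3_of_P3 hp (hfin 0) (h012.swapL.swapR)
    · exact Indep3_of_P3 hp (hfin 3) (h123)
    · exact Indep3_of_P3 hp (hfin 4) (h124)
    · exact Indep3_of_P3 hp (hfin 6) (h126)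
    · exact Indep3_of_P3 hp (hfin 2) (h123.swapR)
    · exact Indep3_of_P3 hp (hfin 4) (h134)
    · exact Indep3_of_P3 hp (hfin 5) (h135)
    · exact Indep3_of_P3 hp (hfin 6) (h136)
    · exact Indep3_of_P3 hp (hfin 0) (h014.swapL.swapR)
    · exact Indep3_of_P3 hp (hfin 2) (h124.swapR)
    · exact Indep3_of_P3 hp (hfin 3) (h134.swapR)
    · exact Indep3_of_P3 hp (hfin 5) (h145)
    · exact Indep3_of_P3 hp (hfin 0) (h015.swapL.swapR)
    · exact Indep3_of_P3 hp (hfin 3) (h135.swapR)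
    · exact Indep3_of_P3 hp (hfin 4) (h145.swapR)
    · exact Indep3_of_P3 hp (hfin 6) (h156)
    · exact Indep3_of_P3 hp (hfin 0) (h016.swapL.swapR)
    · exact Indep3_of_P3 hp (hfin 2) (h126.swapR)
    · exact Indep3_of_P3 hp (hfin 3) (h136.swapR)
    · exact Indep3_of_P3 hp (hfin 5) (h156.swapR)
    · exact Indep3_of_P3 hp (hfin 1) (h012.swapR.swapL)
    · exact Indep3_of_P3 hp (hfin 3) (h023.swapL)
    · exact Indep3_of_P3 hp (hfin 5) (h025.swapL)
    · exact Indep3_of_P3 hp (hfin 6) (h026.swapL)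
    · exact Indep3_of_P3 hp (hfin 0) (h012.swapL.swapR.swapL)
    · exact Indep3_of_P3 hp (hfin 3) (h123.swapL)
    · exact Indep3_of_P3 hp (hfin 4) (h124.swapL)
    · exact Indep3_of_P3 hp (hfin 6) (h126.swapL)
    · exact Indep3_of_P3 hp (hfin 0) (h023.swapL.swapR)
    · exact Indep3_of_P3 hp (hfin 1) (h123.swapL.swapR)
    · exact Indep3_of_P3 hp (hfin 4) (h234)
    · exact Indep3_of_P3 hp (hfin 5) (h235)
    · exact Indep3_of_P3 hp (hfin 1) (h124.swapL.swapR)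
    · exact Indep3_of_P3 hp (hfin 3) (h234.swapR)
    · exact Indep3_of_P3 hp (hfin 5) (h245)
    · exact Indep3_of_P3 hp (hfin 6) (h246)
    · exact Indep3_of_P3 hp (hfin 0) (h025.swapL.swapR)
    · exact Indep3_of_P3 hp (hfin 3) (h235.swapR)
    · exact Indep3_of_P3 hp (hfin 4) (h245.swapR)
    · exact Indep3_of_P3 hp (hfin 6) (h256)
    · exact Indep3_of_P3 hp (hfin 0) (h026.swapL.swapR)
    · exact Indep3_of_P3 hp (hfin 1) (h126.swapL.swapR)
    · exact Indep3_of_P3 hp (hfin 4) (h246.swapR)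
    · exact Indep3_of_P3 hp (hfin 5) (h256.swapR)
    · exact Indep3_of_P3 hp (hfin 2) (h023.swapR.swapL)
    · exact Indep3_of_P3 hp (hfin 4) (h034.swapL)
    · exact Indep3_of_P3 hp (hfin 5) (h035.swapL)
    · exact Indep3_of_P3 hp (hfin 6) (h036.swapL)
    · exact Indep3_of_P3 hp (hfin 2) (h123.swapR.swapL)
    · exact Indep3_of_P3 hp (hfin 4) (h134.swapL)
    · exact Indep3_of_P3 hp (hfin 5) (h135.swapL)
    · exact Indep3_of_P3 hp (hfin 6) (h136.swapL)
    · exact Indep3_of_P3 hp (hfin 0) (h023.swapL.swapR.swapL)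
    · exact Indep3_of_P3 hp (hfin 1) (h123.swapL.swapR.swapL)
    · exact Indep3_of_P3 hp (hfin 4) (h234.swapL)
    · exact Indep3_of_P3 hp (hfin 5) (h235.swapL)
    · exact Indep3_of_P3 hp (hfin 0) (h034.swapL.swapR)
    · exact Indep3_of_P3 hp (hfin 1) (h134.swapL.swapR)
    · exact Indep3_of_P3 hp (hfin 2) (h234.swapL.swapR)
    · exact Indep3_of_P3 hp (hfin 6) (h346)
    · exact Indep3_of_P3 hp (hfin 0) (h035.swapL.swapR)
    · exact Indep3_of_P3 hp (hfin 1) (h135.swapL.swapR)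
    · exact Indep3_of_P3 hp (hfin 2) (h235.swapL.swapR)
    · exact Indep3_of_P3 hp (hfin 6) (h356)
    · exact Indep3_of_P3 hp (hfin 0) (h036.swapL.swapR)
    · exact Indep3_of_P3 hp (hfin 1) (h136.swapL.swapR)
    · exact Indep3_of_P3 hp (hfin 4) (h346.swapR)
    · exact Indep3_of_P3 hp (hfin 5) (h356.swapR)
    · exact Indep3_of_P3 hp (hfin 1) (h014.swapR.swapL)
    · exact Indep3_of_P3 hp (hfin 3) (h034.swapR.swapL)
    · exact Indep3_of_P3 hp (hfin 5) (h045.swapL)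
    · exact Indep3_of_P3 hp (hfin 6) (h046.swapL)
    · exact Indep3_of_P3 hp (hfin 0) (h014.swapL.swapR.swapL)
    · exact Indep3_of_P3 hp (hfin 2) (h124.swapR.swapL)
    · exact Indep3_of_P3 hp (hfin 3) (h134.swapR.swapL)
    · exact Indep3_of_P3 hp (hfin 5) (h145.swapL)
    · exact Indep3_of_P3 hp (hfin 1) (h124.swapL.swapR.swapL)
    · exact Indep3_of_P3 hp (hfin 3) (h234.swapR.swapL)
    · exact Indep3_of_P3 hp (hfin 5) (h245.swapL)
    · exact Indep3_of_P3 hp (hfin 6) (h246.swapL)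
    · exact Indep3_of_P3 hp (hfin 0) (h034.swapL.swapR.swapL)
    · exact Indep3_of_P3 hp (hfin 1) (h134.swapL.swapR.swapL)
    · exact Indep3_of_P3 hp (hfin 2) (h234.swapL.swapR.swapL)
    · exact Indep3_of_P3 hp (hfin 6) (h346.swapL)
    · exact Indep3_of_P3 hp (hfin 0) (h045.swapL.swapR)
    · exact Indep3_of_P3 hp (hfin 1) (h145.swapL.swapR)
    · exact Indep3_of_P3 hp (hfin 2) (h245.swapL.swapR)
    · exact Indep3_of_P3 hp (hfin 6) (h456)
    · exact Indep3_of_P3 hp (hfin 0) (h046.swapL.swapR)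
    · exact Indep3_of_P3 hp (hfin 2) (h246.swapL.swapR)
    · exact Indep3_of_P3 hp (hfin 3) (h346.swapL.swapR)
    · exact Indep3_of_P3 hp (hfin 5) (h456.swapR)
    · exact Indep3_of_P3 hp (hfin 1) (h015.swapR.swapL)
    · exact Indep3_of_P3 hp (hfin 2) (h025.swapR.swapL)
    · exact Indep3_of_P3 hp (hfin 3) (h035.swapR.swapL)
    · exact Indep3_of_P3 hp (hfin 4) (h045.swapR.swapL)
    · exact Indep3_of_P3 hp (hfin 0) (h015.swapL.swapR.swapL)
    · exact Indep3_of_P3 hp (hfin 3) (h135.swapR.swapL)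
    · exact Indep3_of_P3 hp (hfin 4) (h145.swapR.swapL)
    · exact Indep3_of_P3 hp (hfin 6) (h156.swapL)
    · exact Indep3_of_P3 hp (hfin 0) (h025.swapL.swapR.swapL)
    · exact Indep3_of_P3 hp (hfin 3) (h235.swapR.swapL)
    · exact Indep3_of_P3 hp (hfin 4) (h245.swapR.swapL)
    · exact Indep3_of_P3 hp (hfin 6) (h256.swapL)
    · exact Indep3_of_P3 hp (hfin 0) (h035.swapL.swapR.swapL)
    · exact Indep3_of_P3 hp (hfin 1) (h135.swapL.swapR.swapL)
    · exact Indep3_of_P3 hp (hfin 2) (h235.swapL.swapR.swapL)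
    · exact Indep3_of_P3 hp (hfin 6) (h356.swapL)
    · exact Indep3_of_P3 hp (hfin 0) (h045.swapL.swapR.swapL)
    · exact Indep3_of_P3 hp (hfin 1) (h145.swapL.swapR.swapL)
    · exact Indep3_of_P3 hp (hfin 2) (h245.swapL.swapR.swapL)
    · exact Indep3_of_P3 hp (hfin 6) (h456.swapL)
    · exact Indep3_of_P3 hp (hfin 1) (h156.swapL.swapR)
    · exact Indep3_of_P3 hp (hfin 2) (h256.swapL.swapR)
    · exact Indep3_of_P3 hp (hfin 3) (h356.swapL.swapR)
    · exact Indep3_of_P3 hp (hfin 4) (h456.swapL.swapR)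
    · exact Indep3_of_P3 hp (hfin 1) (h016.swapR.swapL)
    · exact Indep3_of_P3 hp (hfin 2) (h026.swapR.swapL)
    · exact Indep3_of_P3 hp (hfin 3) (h036.swapR.swapL)
    · exact Indep3_of_P3 hp (hfin 4) (h046.swapR.swapL)
    · exact Indep3_of_P3 hp (hfin 0) (h016.swapL.swapR.swapL)
    · exact Indep3_of_P3 hp (hfin 2) (h126.swapR.swapL)
    · exact Indep3_of_P3 hp (hfin 3) (h136.swapR.swapL)
    · exact Indep3_of_P3 hp (hfin 5) (h156.swapR.swapL)
    · exact Indep3_of_P3 hp (hfin 0) (h026.swapL.swapR.swapL)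
    · exact Indep3_of_P3 hp (hfin 1) (h126.swapL.swapR.swapL)
    · exact Indep3_of_P3 hp (hfin 4) (h246.swapR.swapL)
    · exact Indep3_of_P3 hp (hfin 5) (h256.swapR.swapL)
    · exact Indep3_of_P3 hp (hfin 0) (h036.swapL.swapR.swapL)
    · exact Indep3_of_P3 hp (hfin 1) (h136.swapL.swapR.swapL)
    · exact Indep3_of_P3 hp (hfin 4) (h346.swapR.swapL)
    · exact Indep3_of_P3 hp (hfin 5) (h356.swapR.swapL)
    · exact Indep3_of_P3 hp (hfin 0) (h046.swapL.swapR.swapL)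
    · exact Indep3_of_P3 hp (hfin 2) (h246.swapL.swapR.swapL)
    · exact Indep3_of_P3 hp (hfin 3) (h346.swapL.swapR.swapL)
    · exact Indep3_of_P3 hp (hfin 5) (h456.swapR.swapL)
    · exact Indep3_of_P3 hp (hfin 1) (h156.swapL.swapR.swapL)
    · exact Indep3_of_P3 hp (hfin 2) (h256.swapL.swapR.swapL)
    · exact Indep3_of_P3 hp (hfin 3) (h356.swapL.swapR.swapL)
    · exact Indep3_of_P3 hp (hfin 4) (h456.swapL.swapR.swapL)

end
end

section
/- If random variables {A_i}_{i∈E} satisfy the Fano-non-Fano condition, then there exists an abelian group labeling (𝒜, {θ_i}_{i∈E}) of {A_i}_{i∈E}. -/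
/-!
Write `T(a, b, c)` for the value of `A_123` when `(A_1, A_2, A_3) = (a, b, c)`. Since
`A_1, A_2, A_3` are independent, every triple of support points occurs, and the six `tri`
conditions make `T` factor through Latin squares on the supports in three ways:
`T = u(a, k(b, c)) = v(b, g(a, c)) = w(c, f(a, b))`.
Fix a base triple `(a₀, b₀, c₀)`. The permutations `P_a : T(a₀, b, c) ↦ T(a, b, c)` and
`Q_b : T(a, b₀, c) ↦ T(a, b, c)` of the support of `A_123` commute (this uses the first two
factorizations), and `P_a Q_b = P_a'` whenever `f(a, b) = f(a', b₀)` (the third). So the `P_a`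
form an abelian group acting regularly on the support of `A_123`, which thereby becomes an
abelian group with `T(a, b, c) = T(a, b₀, c₀) + T(a₀, b, c₀) + T(a₀, b₀, c)`. The labels are
these three summands and their partial sums.
-/

open scoped Classical

noncomputable section

/-- `(𝒜, θ)` is an abelian group labeling of `A 0, …, A 6`: `𝒜` is an abelian group,
each `θ i` is a bijection from the support of `A i` onto `𝒜`, and almost surely
`θ_12(A_12) = θ_1(A_1) + θ_2(A_2)`, `θ_13(A_13) = θ_1(A_1) + θ_3(A_3)`,
`θ_23(A_23) = θ_2(A_2) + θ_3(A_3)`, `θ_123(A_123) = θ_1(A_1) + θ_2(A_2) + θ_3(A_3)`. -/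
def IsAbelianLabeling {Ω : Type} (p : Ω → ℝ) {α : Fin 7 → Type} (A : ∀ i, Ω → α i)
    (𝒜 : Type) [AddCommGroup 𝒜] (θ : ∀ i, α i → 𝒜) : Prop :=
  (∀ i, Set.BijOn (θ i) (supp p (A i)) Set.univ) ∧
  Pr p {ω | θ 3 (A 3 ω) = θ 0 (A 0 ω) + θ 1 (A 1 ω)
      ∧ θ 4 (A 4 ω) = θ 0 (A 0 ω) + θ 2 (A 2 ω)
      ∧ θ 5 (A 5 ω) = θ 1 (A 1 ω) + θ 2 (A 2 ω)
      ∧ θ 6 (A 6 ω) = θ 0 (A 0 ω) + θ 1 (A 1 ω) + θ 2 (A 2 ω)} = 1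

open Function

theorem exists_pos_of_Pr_pos {Ω : Type} {p : Ω → ℝ} {S : Set Ω} (hS : 0 < Pr p S) :
    ∃ ω ∈ S, 0 < p ω := by
  by_contra! h
  exact (tsum_nonpos fun ω : S => h ω ω.2).not_gt hS

namespace IsProb

variable {Ω α : Type} {p : Ω → ℝ}

theorem summable (hp : IsProb p) : Summable p := by
  by_contra hns
  have := hp.2
  rw [Pr, tsum_univ, tsum_eq_zero_of_not_summable hns] at this
  exact zero_ne_one this

theorem le_Pr (hp : IsProb p) {S : Set Ω} {ω : Ω} (hω : ω ∈ S) : p ω ≤ Pr p S :=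
  (hp.summable.subtype S).le_tsum ⟨ω, hω⟩ fun j _ => hp.1 j.1

theorem mem_supp (hp : IsProb p) (X : Ω → α) {ω : Ω} (hω : 0 < p ω) : X ω ∈ supp p X :=
  hω.trans_le (hp.le_Pr rfl)

theorem mem_of_Pr_eq_one (hp : IsProb p) {S : Set Ω} (hS : Pr p S = 1) {ω : Ω} (hω : 0 < p ω) :
    ω ∈ S := by
  by_contra hωS
  have hsplit : Pr p S + Pr p Sᶜ = 1 := by
    rw [Pr, Pr, (hp.summable.subtype S).tsum_add_tsum_compl (hp.summable.subtype Sᶜ), ← hp.2,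
      Pr, tsum_univ]
  linarith [hp.le_Pr (show ω ∈ Sᶜ from hωS)]

theorem Pr_eq_one_of_forall_pos (hp : IsProb p) {S : Set Ω} (hS : ∀ ω, 0 < p ω → ω ∈ S) :
    Pr p S = 1 := by
  rw [← hp.2, Pr, Pr, tsum_univ]
  refine tsum_subtype_eq_of_support_subset fun ω hω => hS ω ?_
  exact (hp.1 ω).lt_of_ne' hω

theorem nonempty_pos (hp : IsProb p) : Nonempty {ω // 0 < p ω} := by
  obtain ⟨ω, -, hω⟩ := exists_pos_of_Pr_pos (hp.2.symm ▸ one_pos : 0 < Pr p Set.univ)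
  exact ⟨⟨ω, hω⟩⟩

def toSupp (hp : IsProb p) (X : Ω → α) (ω : {ω // 0 < p ω}) : supp p X :=
  ⟨X ω, hp.mem_supp X ω.2⟩

end IsProb

theorem FuncOf.eq_of_eq {Ω α β : Type} {p : Ω → ℝ} {X : Ω → α} {Y : Ω → β} (h : FuncOf p X Y)
    (hp : IsProb p) {ω ω' : {ω // 0 < p ω}} (hY : Y ω = Y ω') : X ω = X ω' := by
  obtain ⟨F, hF⟩ := h
  rw [hp.mem_of_Pr_eq_one hF ω.2, hp.mem_of_Pr_eq_one hF ω'.2, hY]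

section RandomVariables

variable {Ω α β γ : Type} {p : Ω → ℝ} (hp : IsProb p) {X : Ω → α} {Y : Ω → β} {Z : Ω → γ}

theorem IndepRV.symm (h : IndepRV p X Y) : IndepRV p Y X := fun b a => by
  simpa only [and_comm, mul_comm] using h a b

theorem IndepRV.exists_toSupp_eq (h : IndepRV p X Y) (a : supp p X) (b : supp p Y) :
    ∃ ω, hp.toSupp X ω = a ∧ hp.toSupp Y ω = b := by
  have hab : 0 < Pr p {ω | X ω = a ∧ Y ω = b} := by rw [h]; exact mul_pos a.2 b.2
  obtain ⟨ω, ⟨hXω, hYω⟩, hω⟩ := exists_pos_of_Pr_pos hab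
  exact ⟨⟨ω, hω⟩, Subtype.ext hXω, Subtype.ext hYω⟩

theorem Indep3.exists_toSupp_eq (h : Indep3 p X Y Z) (a : supp p X) (b : supp p Y)
    (c : supp p Z) : ∃ ω, hp.toSupp X ω = a ∧ hp.toSupp Y ω = b ∧ hp.toSupp Z ω = c := by
  have hab : ((a : α), (b : β)) ∈ supp p fun ω => (X ω, Y ω) := by
    show 0 < Pr p {ω | (X ω, Y ω) = ((a : α), (b : β))}
    simp only [Prod.mk.injEq]
    rw [h.1]
    exact mul_pos a.2 b.2
  obtain ⟨ω, hXY, hZ⟩ := h.2.exists_toSupp_eq hp ⟨_, hab⟩ c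
  have hXY' := congrArg Subtype.val hXY
  exact ⟨ω, Subtype.ext (congrArg Prod.fst hXY'), Subtype.ext (congrArg Prod.snd hXY'), hZ⟩

end RandomVariables

structure IsLatinSquare {α β γ : Type*} (F : α → β → γ) : Prop where
  bijective_row : ∀ a, Bijective (F a)
  bijective_col : ∀ b, Bijective (F · b)

section Tri

variable {Ω α β γ : Type} {p : Ω → ℝ} (hp : IsProb p) {X : Ω → α} {Y : Ω → β} {Z : Ω → γ}

theorem bijective_col_of_funcOf {F : supp p X → supp p Y → supp p Z}
    (hF : ∀ ω, F (hp.toSupp X ω) (hp.toSupp Y ω) = hp.toSupp Z ω)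
    (hX : FuncOf p X fun ω => (Y ω, Z ω)) (hXY : IndepRV p X Y) (hYZ : IndepRV p Y Z)
    (b : supp p Y) : Bijective (F · b) := by
  constructor
  · intro a a' haa'
    obtain ⟨ω, rfl, rfl⟩ := hXY.exists_toSupp_eq hp a b
    obtain ⟨ω', rfl, hYω'⟩ := hXY.exists_toSupp_eq hp a' (hp.toSupp Y ω)
    dsimp only at haa'
    rw [hF, ← hYω', hF] at haa'
    refine Subtype.ext (hX.eq_of_eq hp ?_).symm
    exact Prod.ext (congrArg Subtype.val hYω') (congrArg Subtype.val haa'.symm)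
  · intro s
    obtain ⟨ω, rfl, rfl⟩ := hYZ.exists_toSupp_eq hp b s
    exact ⟨_, hF ω⟩

theorem tri.exists_isLatinSquare (h : tri p X Y Z) :
    ∃ F : supp p X → supp p Y → supp p Z,
      IsLatinSquare F ∧ ∀ ω, F (hp.toSupp X ω) (hp.toSupp Y ω) = hp.toSupp Z ω := by
  obtain ⟨hX, hY, hZ, hXY, hXZ, hYZ⟩ := h
  choose ω hωX hωY using hXY.exists_toSupp_eq hp
  have hF : ∀ ω', hp.toSupp Z (ω (hp.toSupp X ω') (hp.toSupp Y ω')) = hp.toSupp Z ω' :=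
    fun ω' => Subtype.ext <| hZ.eq_of_eq hp <|
      Prod.ext (congrArg Subtype.val (hωX _ _)) (congrArg Subtype.val (hωY _ _))
  exact ⟨fun a b => hp.toSupp Z (ω a b),
    ⟨bijective_col_of_funcOf (F := flip _) hp hF hY hXY.symm hXZ,
      bijective_col_of_funcOf hp hF hX hXY hYZ⟩, hF⟩

end Tri

theorem exists_addCommGroup_of_regular {ι M : Type*} (P : ι → Equiv.Perm M) (x₀ : M)
    (hreg : Bijective fun i => P i x₀) (hmul : ∀ i j, ∃ k, P i * P j = P k)
    (hcomm : ∀ i j, Commute (P i) (P j)) :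
    ∃ _ : AddCommGroup M, ∀ i x, P i x₀ + x = P i x := by
  let e := Equiv.ofBijective _ hreg
  let τ (x : M) : Equiv.Perm M := P (e.symm x)
  have hτ : ∀ x, τ x x₀ = x := e.apply_symm_apply
  have hτP : ∀ i, τ (P i x₀) = P i := fun i => congrArg P (e.symm_apply_apply i)
  have hτmul : ∀ x y, τ x * τ y = τ (τ x y) := by
    intro x y
    obtain ⟨k, hk⟩ := hmul (e.symm x) (e.symm y)
    have hxy : τ x y = P k x₀ := by
      rw [← hk, Equiv.Perm.mul_apply]
      exact congrArg (P _) (hτ y).symm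
    rw [hxy, hτP]
    exact hk
  have hτ₀ : τ x₀ = 1 := mul_eq_left.mp ((hτmul x₀ x₀).trans (by rw [hτ]))
  have hτcomm : ∀ x y, τ x y = τ y x := fun x y => calc
    τ x y = (τ x * τ y) x₀ := by rw [Equiv.Perm.mul_apply, hτ]
    _ = (τ y * τ x) x₀ := congrArg (· x₀) (hcomm _ _).eq
    _ = τ y x := by rw [Equiv.Perm.mul_apply, hτ]
  let _ : Add M := ⟨fun x y => τ x y⟩
  let _ : Zero M := ⟨x₀⟩
  let _ : Neg M := ⟨fun x => (τ x).symm x₀⟩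
  let G : AddCommGroup M :=
    { AddGroup.ofLeftAxioms (fun x y z => (DFunLike.congr_fun (hτmul x y) z).symm)
        (fun x => DFunLike.congr_fun hτ₀ x)
        (fun x => (hτcomm _ x).trans ((τ x).apply_symm_apply x₀)) with
      add_comm := hτcomm }
  exact ⟨G, fun i x => DFunLike.congr_fun (hτP i) x⟩

section Factorizations

variable {X₁ X₂ X₃ X₁₂ X₁₃ X₂₃ M : Type*} {f : X₁ → X₂ → X₁₂} {g : X₁ → X₃ → X₁₃}
  {k : X₂ → X₃ → X₂₃} {u : X₁ → X₂₃ → M} {v : X₂ → X₁₃ → M} {w : X₃ → X₁₂ → M}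

theorem exists_addCommGroup_of_factorizations (hf : IsLatinSquare f) (hu : IsLatinSquare u)
    (hv : IsLatinSquare v) (hw : IsLatinSquare w) (huw : ∀ a b c, u a (k b c) = w c (f a b))
    (huv : ∀ a b c, u a (k b c) = v b (g a c)) (a₀ : X₁) (b₀ : X₂) (c₀ : X₃) :
    ∃ _ : AddCommGroup M, u a₀ (k b₀ c₀) = 0 ∧
      ∀ a b c, u a (k b c) = u a (k b₀ c₀) + u a₀ (k b c₀) + u a₀ (k b₀ c) := by
  let U a := Equiv.ofBijective (u a) (hu.bijective_row a)
  let V b := Equiv.ofBijective (v b) (hv.bijective_row b)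
  let P a : Equiv.Perm M := (U a₀).symm.trans (U a)
  let Q b : Equiv.Perm M := (V b₀).symm.trans (V b)
  have hP : ∀ a r, P a (u a₀ r) = u a r := fun a r => congrArg (u a) ((U a₀).symm_apply_apply r)
  have hQ : ∀ a b c, Q b (u a (k b₀ c)) = u a (k b c) := fun a b c => by
    rw [huv, huv a b]
    exact congrArg (v b) ((V b₀).symm_apply_apply _)
  have hsurj : ∀ x, ∃ c, u a₀ (k b₀ c) = x := fun x => by
    simpa only [huw] using (hw.bijective_col (f a₀ b₀)).2 x
  have hcomm_PQ : ∀ a b, P a * Q b = Q b * P a := fun a b => by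
    ext x
    obtain ⟨c, rfl⟩ := hsurj x
    rw [Equiv.Perm.mul_apply, Equiv.Perm.mul_apply, hQ, hP, hP, hQ]
  have hPQ_eq : ∀ a b a', f a b = f a' b₀ → P a * Q b = P a' := fun a b a' hab => by
    ext x
    obtain ⟨c, rfl⟩ := hsurj x
    rw [Equiv.Perm.mul_apply, hQ, hP, hP, huw, huw, hab]
  have hP₀ : P a₀ = 1 := Equiv.symm_trans_self _
  have hQ_eq_P : ∀ b, ∃ a, Q b = P a := fun b => by
    obtain ⟨a, ha⟩ := (hf.bijective_col b₀).2 (f a₀ b)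
    exact ⟨a, by rw [← hPQ_eq a₀ b a ha.symm, hP₀, one_mul]⟩
  have hP_eq_Q : ∀ a, ∃ b, P a = Q b := fun a => by
    obtain ⟨b, hb⟩ := (hf.bijective_row a₀).2 (f a b₀)
    exact ⟨b, by rw [← hPQ_eq a₀ b a hb, hP₀, one_mul]⟩
  obtain ⟨G, hG⟩ := exists_addCommGroup_of_regular P (u a₀ (k b₀ c₀))
    (by simpa only [hP] using hu.bijective_col (k b₀ c₀))
    (fun a a' => by
      obtain ⟨b, hb⟩ := hP_eq_Q a'
      obtain ⟨a'', ha''⟩ := (hf.bijective_col b₀).2 (f a b)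
      exact ⟨a'', hb ▸ hPQ_eq a b a'' ha''.symm⟩)
    (fun a a' => by
      obtain ⟨b, hb⟩ := hP_eq_Q a'
      exact hb ▸ hcomm_PQ a b)
  simp only [hP] at hG
  have hQG : ∀ b x, u a₀ (k b c₀) + x = Q b x := fun b x => by
    obtain ⟨a, ha⟩ := hQ_eq_P b
    rw [← hQ, ha, hP, hG]
  refine ⟨G, ?_, fun a b c => ?_⟩
  · simpa only [hP₀, Equiv.Perm.one_apply, add_zero] using hG a₀ 0
  · rw [add_assoc, hQG, hG, hQ, hP]

end Factorizations

theorem Function.Bijective.bijOn_extend_val {α β : Type*} {s : Set α} {e : s → β}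
    (he : Bijective e) (d : α → β) : Set.BijOn (extend Subtype.val e d) s Set.univ := by
  have hres : s.domRestrict (extend Subtype.val e d) = e :=
    funext (Subtype.val_injective.extend_apply e d)
  rw [Set.BijOn, Set.injOn_iff_injective, Set.surjOn_iff_surjective, hres]
  exact ⟨Set.mapsTo_univ _ _, he.1, he.2⟩

-- `IsAbelianLabeling` asks for `Pr p {ω | LabelRelations fun i => θ i (A i ω)} = 1`.
def LabelRelations {𝒜 : Type} [AddCommGroup 𝒜] (y : Fin 7 → 𝒜) : Prop :=
  y 3 = y 0 + y 1 ∧ y 4 = y 0 + y 2 ∧ y 5 = y 1 + y 2 ∧ y 6 = y 0 + y 1 + y 2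

section Labeling

variable {Ω : Type} {p : Ω → ℝ} {α : Fin 7 → Type} {A : ∀ i, Ω → α i}

theorem fnf.exists_labeling_on_supp (h : fnf p A) (hp : IsProb p) :
    ∃ (_ : AddCommGroup (supp p (A 6))) (θ : ∀ i, supp p (A i) → supp p (A 6)),
      (∀ i, Bijective (θ i)) ∧ ∀ ω, LabelRelations fun i => θ i (hp.toSupp (A i) ω) := by
  obtain ⟨f, hf, hfA⟩ := (h.1 0 1 3 (by unfold inDN; decide)).exists_isLatinSquare hp
  obtain ⟨g, -, hgA⟩ := (h.1 0 2 4 (by unfold inDN; decide)).exists_isLatinSquare hp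
  obtain ⟨k, -, hkA⟩ := (h.1 1 2 5 (by unfold inDN; decide)).exists_isLatinSquare hp
  obtain ⟨u, hu, huA⟩ := (h.1 0 5 6 (by unfold inDN; decide)).exists_isLatinSquare hp
  obtain ⟨v, hv, hvA⟩ := (h.1 1 4 6 (by unfold inDN; decide)).exists_isLatinSquare hp
  obtain ⟨w, hw, hwA⟩ := (h.1 2 3 6 (by unfold inDN; decide)).exists_isLatinSquare hp
  have realize := (h.2 0 1 2 (by unfold inIF inDF inDN; decide)).exists_toSupp_eq hp
  have huw : ∀ a b c, u a (k b c) = w c (f a b) := fun a b c => by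
    obtain ⟨ω, rfl, rfl, rfl⟩ := realize a b c
    rw [hkA, huA, hfA, hwA]
  have huv : ∀ a b c, u a (k b c) = v b (g a c) := fun a b c => by
    obtain ⟨ω, rfl, rfl, rfl⟩ := realize a b c
    rw [hkA, huA, hgA, hvA]
  obtain ⟨ω₀⟩ := hp.nonempty_pos
  set a₀ := hp.toSupp (A 0) ω₀
  set b₀ := hp.toSupp (A 1) ω₀
  set c₀ := hp.toSupp (A 2) ω₀
  obtain ⟨G, h₀, hT⟩ := exists_addCommGroup_of_factorizations hf hu hv hw huw huv a₀ b₀ c₀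
  -- each label is a row or a column of a Latin square, and by `huw`, `huv` a value of `u a (k b c)`
  refine ⟨G, fun i => match i with
    | 0 => (u · (k b₀ c₀)) | 1 => (v · (g a₀ c₀)) | 2 => (w · (f a₀ b₀))
    | 3 => w c₀ | 4 => v b₀ | 5 => u a₀ | 6 => id, fun i => ?_, fun ω => ?_⟩
  · fin_cases i
    exacts [hu.bijective_col _, hv.bijective_col _, hw.bijective_col _, hw.bijective_row _,
      hv.bijective_row _, hu.bijective_row _, bijective_id]
  · refine ⟨?_, ?_, ?_, ?_⟩ <;> dsimp only <;>
      simp only [id_eq, ← hfA, ← hgA, ← hkA, ← huA, ← huw, ← huv] <;>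
      conv_lhs => rw [hT]
    all_goals simp only [h₀, add_zero, zero_add]

theorem isAbelianLabeling_extend (hp : IsProb p) {𝒜 : Type} [AddCommGroup 𝒜]
    (θ : ∀ i, supp p (A i) → 𝒜) (hθ : ∀ i, Bijective (θ i))
    (hrel : ∀ ω, LabelRelations fun i => θ i (hp.toSupp (A i) ω)) :
    IsAbelianLabeling p A 𝒜 fun i => extend Subtype.val (θ i) 0 := by
  refine ⟨fun i => (hθ i).bijOn_extend_val 0, hp.Pr_eq_one_of_forall_pos fun ω hω => ?_⟩
  have hext : ∀ i, extend Subtype.val (θ i) 0 (A i ω) = θ i (hp.toSupp (A i) ⟨ω, hω⟩) :=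
    fun i => Subtype.val_injective.extend_apply (θ i) 0 (hp.toSupp (A i) ⟨ω, hω⟩)
  change LabelRelations fun i => extend Subtype.val (θ i) 0 (A i ω)
  simpa only [hext] using hrel ⟨ω, hω⟩

end Labeling

/-- Proposition `labeling`: if the random variables `{A_i}_{i ∈ E}` satisfy
the Fano-non-Fano condition, then there exists an abelian group labeling
`(𝒜, {θ_i}_{i ∈ E})`, with `𝒜` a finite abelian group. -/
theorem fnf_implies_abelianLabeling {Ω : Type} (p : Ω → ℝ) (hp : IsProb p)
    {α : Fin 7 → Type} (A : ∀ i, Ω → α i) (hfin : ∀ i, (supp p (A i)).Finite)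
    (h : fnf p A) :
    ∃ (𝒜 : Type) (_ : Fintype 𝒜) (inst : AddCommGroup 𝒜) (θ : ∀ i, α i → 𝒜),
      @IsAbelianLabeling Ω p α A 𝒜 inst θ := by
  obtain ⟨G, θ, hθ, hrel⟩ := h.exists_labeling_on_supp hp
  exact ⟨_, (hfin 6).fintype, G, _, isAbelianLabeling_extend hp θ hθ hrel⟩

end
end

section
/- Let 𝒜 be an abelian group and g_1, g_2, g_3 : 𝒜 → 𝒜 be endomorphisms. Then there exists a function h : 𝒜 × 𝒜 → 𝒜 such that h(a_1 − g_1(a_2), a_2 − g_2(a_3)) = a_1 − g_3(a_3) for all a_1, a_2, a_3 ∈ 𝒜 if and only if g_3 = g_1 ∘ g_2. -/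
/-- algebraic core of Proposition `comp_123`: for an abelian group `𝒜`
and endomorphisms `g₁, g₂, g₃ : 𝒜 → 𝒜`, there exists `h : 𝒜 × 𝒜 → 𝒜` with
`h(a₁ − g₁(a₂), a₂ − g₂(a₃)) = a₁ − g₃(a₃)` for all `a₁, a₂, a₃` if and only if
`g₃ = g₁ ∘ g₂`. -/
theorem comp_core {𝒜 : Type} [AddCommGroup 𝒜] (g₁ g₂ g₃ : 𝒜 → 𝒜)
    (h₁ : ∀ a b : 𝒜, g₁ (a + b) = g₁ a + g₁ b)
    (h₂ : ∀ a b : 𝒜, g₂ (a + b) = g₂ a + g₂ b)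
    (h₃ : ∀ a b : 𝒜, g₃ (a + b) = g₃ a + g₃ b) :
    (∃ h : 𝒜 × 𝒜 → 𝒜, ∀ a₁ a₂ a₃ : 𝒜, h (a₁ - g₁ a₂, a₂ - g₂ a₃) = a₁ - g₃ a₃) ↔
      g₃ = g₁ ∘ g₂ := by
  have g₁0 : g₁ 0 = 0 := by have := h₁ 0 0; simpa using this.symm
  have g₃0 : g₃ 0 = 0 := by have := h₃ 0 0; simpa using this.symm
  have g₂0 : g₂ 0 = 0 := by have := h₂ 0 0; simpa using this.symm
  have g₁sub : ∀ a b : 𝒜, g₁ (a - b) = g₁ a - g₁ b := by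
    intro a b
    have := h₁ (a - b) b
    rw [sub_add_cancel] at this
    exact eq_sub_of_add_eq this.symm
  constructor
  · rintro ⟨h, hh⟩
    funext a
    have e1 := hh (g₁ (g₂ a)) (g₂ a) a
    have e2 := hh 0 0 0
    simp [g₁0, g₂0, g₃0, sub_self] at e1 e2
    have : g₁ (g₂ a) - g₃ a = (0:𝒜) := e1.symm.trans e2
    have := sub_eq_zero.mp this
    simp [Function.comp, this]
  · rintro rfl
    refine ⟨fun p => p.1 + g₁ p.2, fun a₁ a₂ a₃ => ?_⟩
    simp only [Function.comp]
    rw [g₁sub]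
    abel
end

section
/- Let 𝒜 be an abelian group and g, h : 𝒜 → 𝒜 be endomorphisms. Then there exists a function κ : 𝒜 × 𝒜 → 𝒜 such that κ(a_1 − a_3, a_1 − g(a_2)) = a_3 − h(a_2) for all a_1, a_2, a_3 ∈ 𝒜 if and only if h = g. -/
/-! Given `w = a₁ - a₃` and `u = a₁ - g a₂`, the value `a₃ - h a₂ = u - w + (g a₂ - h a₂)` is
determined by `(w, u)` exactly when `g - h` is constant, because `a₂` is free once `(w, u)` is
fixed. Endomorphisms vanish at `0`, so for them that constant is `0`. -/

theorem exists_fun_eq_sub_iff_sub_const {A : Type*} [AddCommGroup A] (g h : A → A) :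
    (∃ κ : A × A → A, ∀ a₁ a₂ a₃ : A, κ (a₁ - a₃, a₁ - g a₂) = a₃ - h a₂) ↔
      ∃ c : A, ∀ a, h a = g a + c := by
  constructor
  · rintro ⟨κ, hκ⟩
    refine ⟨-κ (0, 0), fun a => ?_⟩
    have h₀ : κ (0, 0) = g a - h a := by simpa using hκ (g a) a (g a)
    rw [h₀]
    abel
  · rintro ⟨c, hc⟩
    exact ⟨fun p => p.2 - p.1 - c, fun a₁ a₂ a₃ => by simp only [hc]; abel⟩

/-- algebraic core of Proposition `swap_i`: for an abelian group `𝒜`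
and endomorphisms `g, h : 𝒜 → 𝒜`, there exists `κ : 𝒜 × 𝒜 → 𝒜` with
`κ(a₁ − a₃, a₁ − g(a₂)) = a₃ − h(a₂)` for all `a₁, a₂, a₃` if and only if `h = g`. -/
theorem conv_core {𝒜 : Type} [AddCommGroup 𝒜] (g h : 𝒜 → 𝒜)
    (hg : ∀ a b : 𝒜, g (a + b) = g a + g b)
    (hh : ∀ a b : 𝒜, h (a + b) = h a + h b) :
    (∃ κ : 𝒜 × 𝒜 → 𝒜, ∀ a₁ a₂ a₃ : 𝒜, κ (a₁ - a₃, a₁ - g a₂) = a₃ - h a₂) ↔ h = g := by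
  have hg₀ : g 0 = 0 := map_zero (AddMonoidHom.mk' g hg)
  have hh₀ : h 0 = 0 := map_zero (AddMonoidHom.mk' h hh)
  rw [exists_fun_eq_sub_iff_sub_const]
  constructor
  · rintro ⟨c, hc⟩
    have hc₀ : c = 0 := by simpa [hg₀, hh₀] using (hc 0).symm
    funext a
    simp [hc, hc₀]
  · rintro rfl
    exact ⟨0, fun a => (add_zero _).symm⟩
end

section
/- Given l, k ∈ ℤ>0 and indices a_i, b_i, c_i ∈ {1,…,k} for i = 0,…,l, the following are equivalent: (i) for every finite monoid (ℳ, ·, e) and all x_1,…,x_k ∈ ℳ, the implication (⋀_{i=1}^{l} x_{a_i} · x_{b_i} = x_{c_i}) → x_{a_0} = x_{c_0} holds; (ii) for every finite abelian group 𝒜 and all x_1,…,x_k ∈ End(𝒜), the same implication holds in the endomorphism monoid End(𝒜). -/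
/-- for `l, k ≥ 1` and index tuples `a_i, b_i, c_i ∈ {1,…,k}` for
`i = 0,…,l`, the implication `(⋀_{i=1}^{l} x_{a_i} · x_{b_i} = x_{c_i}) → x_{a_0} = x_{c_0}`
holds for every finite monoid `ℳ` and all `x_1,…,x_k ∈ ℳ` if and only if it holds for
every finite abelian group `𝒜` and all `x_1,…,x_k` in the endomorphism monoid `End(𝒜)`. -/
theorem monoid_iff_endomorphism (l k : ℕ) (hl : 1 ≤ l) (hk : 1 ≤ k)
    (a b c : Fin (l + 1) → Fin k) :
    (∀ (M : Type) [Fintype M] [Monoid M] (x : Fin k → M),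
      (∀ i : Fin l, x (a i.succ) * x (b i.succ) = x (c i.succ)) → x (a 0) = x (c 0)) ↔
    (∀ (𝒜 : Type) [Fintype 𝒜] [AddCommGroup 𝒜] (x : Fin k → AddMonoid.End 𝒜),
      (∀ i : Fin l, x (a i.succ) * x (b i.succ) = x (c i.succ)) → x (a 0) = x (c 0)) := by
  constructor
  · intro h 𝒜 _ _ x hx
    classical
    letI : Fintype (AddMonoid.End 𝒜) :=
      Fintype.ofInjective (fun g : AddMonoid.End 𝒜 => (g : 𝒜 → 𝒜)) DFunLike.coe_injective
    exact h (AddMonoid.End 𝒜) x hx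
  · intro h M _ _ x hx
    classical
    -- Embed `M` into the endomorphism monoid of the finite abelian group `M → ZMod 2`.
    let ψ : M → AddMonoid.End (M → ZMod 2) := fun m =>
      { toFun := fun f y => f (y * m)
        map_zero' := rfl
        map_add' := fun f g => rfl }
    have hψ : ∀ m n : M, ψ m * ψ n = ψ (m * n) := by
      intro m n
      refine AddMonoidHom.ext fun f => funext fun y => ?_
      show f (y * m * n) = f (y * (m * n))
      rw [mul_assoc]
    have hinj : Function.Injective ψ := by
      intro m n hmn
      have h1 := congrFun (congrArg (fun (g : AddMonoid.End (M → ZMod 2)) =>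
        g (fun y => if y = m then (1 : ZMod 2) else 0)) hmn) 1
      have h2 : (if ((1:M) * m) = m then (1 : ZMod 2) else 0) =
          (if ((1:M) * n) = m then (1 : ZMod 2) else 0) := h1
      rw [one_mul, one_mul, if_pos rfl] at h2
      by_contra hne
      rw [if_neg (fun hnm => hne hnm.symm)] at h2
      exact one_ne_zero h2
    have key := h (M → ZMod 2) (fun i => ψ (x i)) (by intro i; rw [hψ, hx])
    exact hinj key
end
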